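/- Let p be an odd prime and k a finite unramified extension of ℚ_p. Then the Milnor K-group K₂^M(k) is p-divisible, i.e., K₂^M(k)/p = 0. -/

import Mathlib

/-!
The Milnor K-group is generated by symbols `{a, b}`, and `Kˣ = p^ℤ · Oˣ` with
`Oˣ = (Oˣ)^p · (1 + pO)` because the residue field is perfect. As `p` is odd and unramified,
`(1 + py)^p = 1 + p²y + p³H(y)`, and a `p`-adic fixed-point iteration shows that every element
of `1 + p²O` is a `p`-th power. For principal units `1 - α`, `1 - β` the element `1 - αβ` is
then a `p`-th power `c^p`, and the Steinberg relation for `U = α(1 - β)/c^p`, whose complement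
is `1 - U = (1 - α)/c^p`, writes `{1 - β, 1 - α}` as a multiple of `p`. The symbol
`{p, 1 + pt}` is a unit symbol by `{-pt, 1 + pt} = 0` when `t` is a unit and has a `p`-th power
entry otherwise, and `{p, p} = {p, -1} = {p, (-1)^p}`.
-/

open scoped TensorProduct

/-- The Steinberg subgroup of `kˣ ⊗_ℤ kˣ` (written additively), generated by the elements
`a ⊗ (1 − a)` for `a ≠ 0, 1`. -/
noncomputable def steinbergSubgroup (K : Type) [Field K] :
    AddSubgroup (Additive Kˣ ⊗[ℤ] Additive Kˣ) :=
  AddSubgroup.closure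
    {z | ∃ (a : Kˣ) (h : (a : K) ≠ 1),
      z = Additive.ofMul a ⊗ₜ[ℤ]
        Additive.ofMul (Units.mk0 (1 - (a : K)) (sub_ne_zero.mpr h.symm))}

/-- The Milnor K-group `K₂^M(k)`: the quotient of `kˣ ⊗_ℤ kˣ` by the Steinberg relations
`a ⊗ (1 − a)`. -/
noncomputable def MilnorK2 (K : Type) [Field K] : Type :=
  (Additive Kˣ ⊗[ℤ] Additive Kˣ) ⧸ steinbergSubgroup K

noncomputable instance (K : Type) [Field K] : AddCommGroup (MilnorK2 K) :=
  QuotientAddGroup.Quotient.addCommGroup _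

open Polynomial IsLocalRing

namespace MilnorK2

variable {K : Type} [Field K]

noncomputable def symbol (a b : Kˣ) : MilnorK2 K :=
  QuotientAddGroup.mk (Additive.ofMul a ⊗ₜ[ℤ] Additive.ofMul b)

theorem symbol_mul_left (a b c : Kˣ) : symbol (a * b) c = symbol a c + symbol b c := by
  rw [symbol, ofMul_mul, TensorProduct.add_tmul]; rfl

theorem symbol_mul_right (a b c : Kˣ) : symbol a (b * c) = symbol a b + symbol a c := by
  rw [symbol, ofMul_mul, TensorProduct.tmul_add]; rfl

theorem symbol_pow_left (a b : Kˣ) (n : ℕ) : symbol (a ^ n) b = n • symbol a b :=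
  (AddMonoidHom.mk' (fun x : Additive Kˣ ↦ symbol x.toMul b) fun x y ↦
    symbol_mul_left x.toMul y.toMul b).map_nsmul n (.ofMul a)

theorem symbol_pow_right (a b : Kˣ) (n : ℕ) : symbol a (b ^ n) = n • symbol a b :=
  (AddMonoidHom.mk' (fun y : Additive Kˣ ↦ symbol a y.toMul) fun x y ↦
    symbol_mul_right a x.toMul y.toMul).map_nsmul n (.ofMul b)

theorem symbol_zpow_left (a b : Kˣ) (n : ℤ) : symbol (a ^ n) b = n • symbol a b :=
  (AddMonoidHom.mk' (fun x : Additive Kˣ ↦ symbol x.toMul b) fun x y ↦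
    symbol_mul_left x.toMul y.toMul b).map_zsmul n (.ofMul a)

theorem symbol_zpow_right (a b : Kˣ) (n : ℤ) : symbol a (b ^ n) = n • symbol a b :=
  (AddMonoidHom.mk' (fun y : Additive Kˣ ↦ symbol a y.toMul) fun x y ↦
    symbol_mul_right a x.toMul y.toMul).map_zsmul n (.ofMul b)

theorem symbol_one_left (b : Kˣ) : symbol 1 b = 0 := by
  simpa using symbol_pow_left b b 0

theorem symbol_one_right (a : Kˣ) : symbol a 1 = 0 := by
  simpa using symbol_pow_right a a 0

theorem symbol_inv_left (a b : Kˣ) : symbol a⁻¹ b = -symbol a b := by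
  simpa using symbol_zpow_left a b (-1)

theorem symbol_inv_right (a b : Kˣ) : symbol a b⁻¹ = -symbol a b := by
  simpa using symbol_zpow_right a b (-1)

theorem symbol_eq_zero_of_add_eq_one {a b : Kˣ} (h : (a : K) + b = 1) : symbol a b = 0 := by
  have ha : (a : K) ≠ 1 := fun ha ↦ b.ne_zero (by linear_combination h - ha)
  obtain rfl : b = Units.mk0 (1 - (a : K)) (sub_ne_zero.2 ha.symm) :=
    Units.ext (by simp only [Units.val_mk0]; linear_combination h)
  exact (QuotientAddGroup.eq_zero_iff _).2 (AddSubgroup.subset_closure ⟨a, ha, rfl⟩)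

theorem symbol_self_neg (a : Kˣ) : symbol a (-a) = 0 := by
  rcases eq_or_ne a 1 with rfl | ha
  · exact symbol_one_left _
  have h₁ : 1 - (a : K) ≠ 0 := sub_ne_zero.2 (Ne.symm (Units.val_eq_one.not.2 ha))
  have h₂ : 1 - ((a⁻¹ : Kˣ) : K) ≠ 0 :=
    sub_ne_zero.2 (Ne.symm (Units.val_eq_one.not.2 (inv_ne_one.2 ha)))
  have hneg : -a = Units.mk0 _ h₁ * (Units.mk0 _ h₂)⁻¹ := by
    rw [eq_mul_inv_iff_mul_eq]
    ext
    simp only [Units.val_neg, Units.val_mul, Units.val_mk0, Units.val_inv_eq_inv_val]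
    field_simp
    ring
  rw [hneg, symbol_mul_right, symbol_inv_right, ← symbol_inv_left,
    symbol_eq_zero_of_add_eq_one (by simp), symbol_eq_zero_of_add_eq_one (by simp), add_zero]

theorem symbol_swap (a b : Kˣ) : symbol b a = -symbol a b := by
  have h₁ : symbol a (-(a * b)) = symbol a b := by
    rw [← neg_mul, symbol_mul_right, symbol_self_neg, zero_add]
  have h₂ : symbol b (-(a * b)) = symbol b a := by
    rw [mul_comm, ← neg_mul, symbol_mul_right, symbol_self_neg, zero_add]
  have h := symbol_self_neg (a * b)
  rw [symbol_mul_left, h₁, h₂] at h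
  exact eq_neg_of_add_eq_zero_right h

theorem eq_top_of_symbol_mem {S : AddSubgroup (MilnorK2 K)} (h : ∀ a b, symbol a b ∈ S) :
    S = ⊤ := by
  refine (AddSubgroup.eq_top_iff' S).2 fun z ↦ ?_
  obtain ⟨z, rfl⟩ := QuotientAddGroup.mk'_surjective (steinbergSubgroup K) z
  induction z using TensorProduct.induction_on with
  | zero => exact S.zero_mem
  | tmul x y => exact h (Additive.toMul x) (Additive.toMul y)
  | add x y hx hy => rw [map_add]; exact S.add_mem hx hy

theorem symbol_pow_left_mem (n : ℕ) (a b : Kˣ) :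
    symbol (a ^ n) b ∈ (nsmulAddMonoidHom n).range :=
  ⟨symbol a b, (symbol_pow_left a b n).symm⟩

theorem symbol_pow_right_mem (n : ℕ) (a b : Kˣ) :
    symbol a (b ^ n) ∈ (nsmulAddMonoidHom n).range :=
  ⟨symbol a b, (symbol_pow_right a b n).symm⟩

theorem symbol_self_mem_of_odd {n : ℕ} (hn : Odd n) (a : Kˣ) :
    symbol a a ∈ (nsmulAddMonoidHom n).range := by
  have : symbol a a = symbol a ((-1) ^ n) := by
    rw [hn.neg_one_pow, ← add_zero (symbol a (-1)), ← symbol_self_neg a, ← symbol_mul_right,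
      neg_one_mul, neg_neg]
  exact this ▸ symbol_pow_right_mem n a (-1)

theorem symbol_mem_of_pow_eq_one_sub_mul {n : ℕ} {x y c : Kˣ} (hx : (x : K) ≠ 1)
    (hc : (c : K) ^ n = 1 - (1 - x) * (1 - y)) : symbol y x ∈ (nsmulAddMonoidHom n).range := by
  set a := Units.mk0 (1 - (x : K)) (sub_ne_zero.2 hx.symm)
  have hcn : (c : K) ^ n ≠ 0 := pow_ne_zero _ c.ne_zero
  -- the Steinberg relation for `U = (1 - x) y / c^n`, whose complement is `1 - U = x / c^n`
  have hU : ((a * y * (c ^ n)⁻¹ : Kˣ) : K) + (x * (c ^ n)⁻¹ : Kˣ) = 1 := by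
    simp only [a, Units.val_mul, Units.val_inv_eq_inv_val, Units.val_pow_eq_pow_val,
      Units.val_mk0]
    field_simp
    linear_combination -hc
  have h := symbol_eq_zero_of_add_eq_one hU
  simp only [symbol_mul_left, symbol_mul_right, symbol_inv_left, symbol_inv_right,
    symbol_pow_left, symbol_pow_right] at h
  rw [symbol_eq_zero_of_add_eq_one (a := a) (b := x) (by simp [a])] at h
  refine ⟨symbol c x + symbol a c + symbol y c - n • symbol c c, ?_⟩
  rw [nsmulAddMonoidHom_apply]
  linear_combination (norm := module) -h

theorem symbol_pow_mul_left_mem_iff {n : ℕ} {a b c : Kˣ} :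
    symbol (c ^ n * a) b ∈ (nsmulAddMonoidHom n).range ↔
      symbol a b ∈ (nsmulAddMonoidHom n).range := by
  rw [symbol_mul_left]
  exact AddSubgroup.add_mem_cancel_left _ (symbol_pow_left_mem n c b)

theorem symbol_pow_mul_right_mem_iff {n : ℕ} {a b c : Kˣ} :
    symbol a (c ^ n * b) ∈ (nsmulAddMonoidHom n).range ↔
      symbol a b ∈ (nsmulAddMonoidHom n).range := by
  rw [symbol_mul_right]
  exact AddSubgroup.add_mem_cancel_left _ (symbol_pow_right_mem n a c)

end MilnorK2

theorem Nat.Prime.pow_three_dvd_choose_mul_pow {p k : ℕ} (hp : p.Prime) (hodd : p ≠ 2)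
    (hk : k ∈ Finset.Icc 2 p) : p ^ 3 ∣ p.choose k * p ^ k := by
  obtain ⟨hk₂, hkp⟩ := Finset.mem_Icc.1 hk
  rcases hk₂.eq_or_lt with rfl | hk₃
  · have := hp.dvd_choose_self two_ne_zero (lt_of_le_of_ne hkp (Ne.symm hodd))
    rw [pow_succ']
    exact mul_dvd_mul_right this _
  · exact dvd_mul_of_dvd_right (pow_dvd_pow p hk₃) _

theorem exists_one_add_mul_pow_eq {R : Type*} [CommRing R] {p : ℕ} (hp : p.Prime) (hodd : p ≠ 2) :
    ∃ H : R[X], ∀ y : R, (1 + p * y) ^ p = 1 + p ^ 2 * y + p ^ 3 * H.eval y := by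
  refine ⟨∑ k ∈ Finset.Icc 2 p, C ((p.choose k * p ^ k / p ^ 3 : ℕ) : R) * X ^ k, fun y ↦ ?_⟩
  have hsum : ∑ k ∈ Finset.Icc 2 p, ((p : R) * y) ^ k * (p.choose k : R) =
      p ^ 3 * ∑ k ∈ Finset.Icc 2 p, ((p.choose k * p ^ k / p ^ 3 : ℕ) : R) * y ^ k := by
    rw [Finset.mul_sum]
    refine Finset.sum_congr rfl fun k hk ↦ ?_
    have := congrArg (Nat.cast (R := R))
      (Nat.mul_div_cancel' (hp.pow_three_dvd_choose_mul_pow hodd hk))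
    push_cast at this
    linear_combination (-y ^ k) * this
  have hsplit : Finset.range (p + 1) = insert 0 (insert 1 (Finset.Icc 2 p)) := by
    ext k
    simp only [Finset.mem_range, Finset.mem_insert, Finset.mem_Icc]
    have := hp.one_lt
    omega
  rw [add_comm 1, add_pow, hsplit, Finset.sum_insert (by simp), Finset.sum_insert (by simp)]
  simp only [one_pow, mul_one]
  rw [hsum]
  simp only [pow_zero, Nat.choose_zero_right, Nat.cast_one, mul_one, pow_one, Nat.choose_one_right,
    map_natCast, eval_finsetSum, eval_mul, eval_natCast, eval_pow, eval_X]
  ring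

theorem smodEq_span_singleton_pow_iff {R : Type*} [CommRing R] {r x y : R} {n : ℕ} :
    x ≡ y [SMOD (Ideal.span {r} ^ n • ⊤ : Submodule R R)] ↔ r ^ n ∣ x - y := by
  rw [SModEq.sub_mem, smul_eq_mul, Ideal.mul_top, Ideal.span_singleton_pow,
    Ideal.mem_span_singleton]

theorem IsAdicComplete.exists_isFixedPt {R : Type*} [CommRing R] {r : R}
    [IsAdicComplete (Ideal.span {r}) R] {f : R → R} (hf : ∀ y z, r * (y - z) ∣ f y - f z) :
    ∃ x, Function.IsFixedPt f x := by
  set y : ℕ → R := fun n ↦ f^[n] 0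
  have hstep : ∀ n, r ^ n ∣ y (n + 1) - y n := by
    intro n
    induction n with
    | zero => simp
    | succ n ih =>
      simp only [y, Function.iterate_succ_apply'] at ih ⊢
      rw [pow_succ']
      exact (mul_dvd_mul_left r ih).trans (hf _ _)
  have hcauchy : AdicCompletion.IsAdicCauchy (Ideal.span {r}) R y :=
    (AdicCompletion.isAdicCauchy_iff _ _ _).2 fun n ↦
      smodEq_span_singleton_pow_iff.2 (dvd_sub_comm.1 (hstep n))
  obtain ⟨x, hx⟩ := IsPrecomplete.prec inferInstance hcauchy
  refine ⟨x, IsHausdorff.eq_iff_smodEq (I := Ideal.span {r}).2 fun n ↦ ?_⟩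
  have hfx : r ^ n ∣ f x - f (y n) :=
    (smodEq_span_singleton_pow_iff.1 (hx n).symm).trans ((dvd_mul_left _ _).trans (hf _ _))
  have hyx : r ^ n ∣ y (n + 1) - x :=
    (pow_dvd_pow r n.le_succ).trans (smodEq_span_singleton_pow_iff.1 (hx (n + 1)))
  have : f (y n) = y (n + 1) := (Function.iterate_succ_apply' f n 0).symm
  exact smodEq_span_singleton_pow_iff.2 (by simpa [this] using dvd_add hfx hyx)

theorem exists_pow_eq_one_add_sq_mul {O : Type*} [CommRing O] {p : ℕ} (hp : p.Prime)
    (hodd : p ≠ 2) [IsAdicComplete (Ideal.span {(p : O)}) O] (x : O) :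
    ∃ c : Oˣ, (c : O) ^ p = 1 + p ^ 2 * x := by
  obtain ⟨H, hH⟩ := exists_one_add_mul_pow_eq (R := O) hp hodd
  obtain ⟨y, hy⟩ := IsAdicComplete.exists_isFixedPt (r := (p : O))
    (f := fun y ↦ x - p * H.eval y) fun y z ↦ by
      rw [show x - p * H.eval y - (x - p * H.eval z) = -(p * (H.eval y - H.eval z)) by ring]
      exact (mul_dvd_mul_left _ (sub_dvd_eval_sub y z H)).neg_right
  replace hy : x - p * H.eval y = y := hy
  have hunit : IsUnit ((p : O) * y + 1) := Ideal.mem_jacobson_bot.1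
    (IsAdicComplete.le_jacobson_bot _ (Ideal.mem_span_singleton_self _)) y
  refine ⟨hunit.unit, ?_⟩
  rw [IsUnit.unit_spec, add_comm, hH]
  linear_combination -(p : O) ^ 2 * hy

theorem exists_units_eq_pow_mul_of_perfectRing {O : Type*} [CommRing O] [IsLocalRing O]
    (p : ℕ) [Fact p.Prime] [PerfectRing (ResidueField O) p] (u : Oˣ) :
    ∃ v w : Oˣ, u = v ^ p * w ∧ (w : O) - 1 ∈ maximalIdeal O := by
  obtain ⟨d, hd⟩ :=
    (PerfectRing.bijective_frobenius (R := ResidueField O) (p := p)).2 (residue O u)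
  obtain ⟨v, rfl⟩ := residue_surjective d
  have hv : IsUnit v := by
    rw [← residue_ne_zero_iff_isUnit]
    refine ne_zero_pow (Fact.out : p.Prime).ne_zero ?_
    simpa only [hd] using (residue_ne_zero_iff_isUnit _).2 u.isUnit
  refine ⟨hv.unit, hv.unit⁻¹ ^ p * u, by group, ?_⟩
  have : (u : O) - v ^ p ∈ maximalIdeal O :=
    Ideal.Quotient.eq.1 (show residue O u = residue O (v ^ p) by rw [map_pow]; exact hd.symm)
  have hw : ((hv.unit⁻¹ ^ p * u : Oˣ) : O) - 1 = ((hv.unit⁻¹ : Oˣ) : O) ^ p * (u - v ^ p) := by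
    rw [Units.val_mul, Units.val_pow_eq_pow_val, mul_sub, ← mul_pow, hv.val_inv_mul, one_pow]
  rw [hw]
  exact Ideal.mul_mem_left _ _ this

section Unramified

open MilnorK2

variable {p : ℕ} [Fact p.Prime] {O K : Type} [CommRing O] [Field K] [Algebra O K]

local notation "ι" => Units.map (algebraMap O K : O →* K)

theorem symbol_units_map_mem_of_dvd_sub_one (hodd : p ≠ 2)
    [IsAdicComplete (Ideal.span {(p : O)}) O] [IsFractionRing O K] {u v : Oˣ}
    (hu : (p : O) ∣ u - 1) (hv : (p : O) ∣ v - 1) :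
    symbol (ι u) (ι v) ∈ (nsmulAddMonoidHom p).range := by
  rcases eq_or_ne v 1 with rfl | hv₁
  · rw [map_one, symbol_one_right]
    exact zero_mem _
  obtain ⟨s, hs⟩ := hu
  obtain ⟨t, ht⟩ := hv
  obtain ⟨c, hc⟩ := exists_pow_eq_one_add_sq_mul (O := O) Fact.out hodd (-(s * t))
  have hc' : (c : O) ^ p = 1 - (1 - v) * (1 - u) := by
    rw [hc]
    linear_combination (v - 1 : O) * hs + p * s * ht
  refine symbol_mem_of_pow_eq_one_sub_mul (c := ι c) ?_ ?_
  · simpa using (IsFractionRing.injective O K).ne (Units.val_eq_one.not.2 hv₁)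
  · simpa using congrArg (algebraMap O K) hc'

theorem symbol_units_map_mem [IsDomain O] [IsDiscreteValuationRing O]
    [IsAdicComplete (Ideal.span {(p : O)}) O] [PerfectRing (ResidueField O) p]
    [IsFractionRing O K] (hodd : p ≠ 2) (hunram : Irreducible (p : O)) (u v : Oˣ) :
    symbol (ι u) (ι v) ∈ (nsmulAddMonoidHom p).range := by
  obtain ⟨u', u₁, rfl, hu₁⟩ := exists_units_eq_pow_mul_of_perfectRing p u
  obtain ⟨v', v₁, rfl, hv₁⟩ := exists_units_eq_pow_mul_of_perfectRing p v
  rw [hunram.maximalIdeal_eq, Ideal.mem_span_singleton] at hu₁ hv₁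
  rw [map_mul, map_mul, map_pow, map_pow, symbol_pow_mul_left_mem_iff,
    symbol_pow_mul_right_mem_iff]
  exact symbol_units_map_mem_of_dvd_sub_one hodd hu₁ hv₁

theorem symbol_uniformizer_units_map_mem [IsDomain O] [IsDiscreteValuationRing O]
    [IsAdicComplete (Ideal.span {(p : O)}) O] [PerfectRing (ResidueField O) p]
    [IsFractionRing O K] (hodd : p ≠ 2) (hunram : Irreducible (p : O)) {π : Kˣ}
    (hπ : (π : K) = algebraMap O K p) (u : Oˣ) :
    symbol π (ι u) ∈ (nsmulAddMonoidHom p).range := by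
  obtain ⟨v, w, rfl, hw⟩ := exists_units_eq_pow_mul_of_perfectRing p u
  rw [map_mul, map_pow, symbol_pow_mul_right_mem_iff]
  rw [hunram.maximalIdeal_eq, Ideal.mem_span_singleton] at hw
  obtain ⟨t, ht⟩ := hw
  by_cases htu : IsUnit t
  · have hsum : ((π * ι (-htu.unit) : Kˣ) : K) + (ι w : Kˣ) = 1 := by
      simp only [Units.val_mul, Units.coe_map, MonoidHom.coe_coe, hπ, Units.val_neg,
        IsUnit.unit_spec, ← map_mul, ← map_add]
      rw [show (p : O) * -t + w = 1 by linear_combination ht, map_one]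
    have h := symbol_eq_zero_of_add_eq_one hsum
    rw [symbol_mul_left, add_eq_zero_iff_eq_neg] at h
    rw [h]
    exact neg_mem (symbol_units_map_mem hodd hunram _ _)
  · rw [← mem_nonunits_iff, ← mem_maximalIdeal, hunram.maximalIdeal_eq,
      Ideal.mem_span_singleton] at htu
    obtain ⟨t', rfl⟩ := htu
    obtain ⟨c, hc⟩ := exists_pow_eq_one_add_sq_mul (O := O) Fact.out hodd t'
    obtain rfl : w = c ^ p := Units.ext (by push_cast; linear_combination ht - hc)
    rw [map_pow]
    exact symbol_pow_right_mem p _ _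

theorem exists_eq_units_map_mul_zpow [IsDomain O] [IsDiscreteValuationRing O]
    [IsFractionRing O K] {ϖ : O} (hϖ : Irreducible ϖ) {π : Kˣ}
    (hπ : (π : K) = algebraMap O K ϖ) (a : Kˣ) : ∃ (n : ℤ) (u : Oˣ), a = ι u * π ^ n := by
  obtain ⟨n, u, h⟩ :=
    IsDiscreteValuationRing.exists_units_eq_smul_zpow_of_irreducible (K := K) hϖ a.ne_zero
  exact ⟨n, u, Units.ext (by simp [h, hπ, Units.smul_def, Algebra.smul_def])⟩

theorem symbol_mem_of_unramified [IsDomain O] [IsDiscreteValuationRing O]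
    [IsAdicComplete (Ideal.span {(p : O)}) O] [PerfectRing (ResidueField O) p]
    [IsFractionRing O K] (hodd : p ≠ 2) (hunram : Irreducible (p : O)) (a b : Kˣ) :
    symbol a b ∈ (nsmulAddMonoidHom p).range := by
  have hπ₀ : algebraMap O K p ≠ 0 :=
    (map_ne_zero_iff _ (IsFractionRing.injective O K)).2 hunram.ne_zero
  set π := Units.mk0 _ hπ₀
  have hπ : (π : K) = algebraMap O K p := rfl
  obtain ⟨m, u, rfl⟩ := exists_eq_units_map_mul_zpow hunram hπ a
  obtain ⟨n, v, rfl⟩ := exists_eq_units_map_mul_zpow hunram hπ b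
  have huv := symbol_units_map_mem (K := K) hodd hunram u v
  have hπv := symbol_uniformizer_units_map_mem hodd hunram hπ v
  have huπ : symbol (ι u) π ∈ (nsmulAddMonoidHom p).range := by
    rw [symbol_swap]
    exact neg_mem (symbol_uniformizer_units_map_mem hodd hunram hπ u)
  have hππ := symbol_self_mem_of_odd ((Fact.out : p.Prime).odd_of_ne_two hodd) π
  simp only [symbol_mul_left, symbol_mul_right, symbol_zpow_left, symbol_zpow_right]
  exact add_mem (add_mem huv (zsmul_mem hπv m)) (zsmul_mem (add_mem huπ (zsmul_mem hππ m)) n)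

end Unramified

/-- The finite unramified extension `k` of `ℚ_p` is encoded as the fraction field `K` of a
complete discrete valuation ring `O` with finite residue field of characteristic `p`, in which
`p` remains a uniformizer (`Irreducible (p : O)`, i.e. the absolute ramification index is `1`). -/
theorem milnorK2_p_divisible_of_unramified_general
    (p : ℕ) [Fact p.Prime] (hodd : p ≠ 2)
    (O : Type) [CommRing O] [IsDomain O] [IsDiscreteValuationRing O]
    [IsAdicComplete (IsLocalRing.maximalIdeal O) O]
    [Finite (IsLocalRing.ResidueField O)] [CharP (IsLocalRing.ResidueField O) p]
    (K : Type) [Field K] [Algebra O K] [IsFractionRing O K]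
    (hunram : Irreducible (p : O)) :
    ∀ z : MilnorK2 K, ∃ w : MilnorK2 K, z = p • w := by
  have : IsAdicComplete (Ideal.span {(p : O)}) O :=
    hunram.maximalIdeal_eq ▸ inferInstance
  have hrange : (nsmulAddMonoidHom (α := MilnorK2 K) p).range = ⊤ :=
    MilnorK2.eq_top_of_symbol_mem (symbol_mem_of_unramified hodd hunram)
  intro z
  obtain ⟨w, hw⟩ := hrange ▸ AddSubgroup.mem_top z
  exact ⟨w, hw.symm⟩

/-- Let `p` be an odd prime and `k` a finite unramified extension of `ℚ_p`.
Then the Milnor K-group `K₂^M(k)` is `p`-divisible, i.e. `K₂^M(k)/p = 0`.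

The finite unramified extension `k` of `ℚ_p` is encoded as the fraction field `K` of a
complete discrete valuation ring `O` of characteristic zero with finite residue field of
characteristic `p`, in which `p` remains a uniformizer (`Irreducible (p : O)`, i.e. the
absolute ramification index is `1`). -/
theorem milnorK2_p_divisible_of_unramified
    (p : ℕ) [Fact p.Prime] (hodd : p ≠ 2)
    (O : Type) [CommRing O] [IsDomain O] [IsDiscreteValuationRing O]
    [IsAdicComplete (IsLocalRing.maximalIdeal O) O]
    [Finite (IsLocalRing.ResidueField O)] [CharP (IsLocalRing.ResidueField O) p]
    (K : Type) [Field K] [CharZero K] [Algebra O K] [IsFractionRing O K]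
    (hunram : Irreducible (p : O)) :
    ∀ z : MilnorK2 K, ∃ w : MilnorK2 K, z = p • w :=
  milnorK2_p_divisible_of_unramified_general p hodd O K hunram
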